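/- If |f'|^q is harmonically quasi-convex on [a,b] for some fixed q ≥ 1, α > 0 and H = 2ab/(a+b), then the following midpoint-type inequality holds: |f(H) − (ab/(b−a))^α 2^{α−1} Γ(α+1) [J_{(1/H)+}^α (f∘g)(1/a) + J_{(1/H)−}^α (f∘g)(1/b)]| ≤ ((b−a)/(4ab)) { a² C₂(α,0,1,a,H) (max{|f'(H)|^q, |f'(a)|^q})^{1/q} + H² C₃(α,0,1,H,b) (max{|f'(H)|^q, |f'(b)|^q})^{1/q} }. -/

import Mathlib

open Real MeasureTheory Set intervalIntegral

/-- Riemann–Liouville left fractional integral `J_{u+}^α h (y)`. -/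
noncomputable def RLplus (α u y : ℝ) (h : ℝ → ℝ) : ℝ :=
  (1 / Real.Gamma α) * ∫ t in u..y, (y - t) ^ (α - 1) * h t

/-- Riemann–Liouville right fractional integral `J_{v−}^α h (y)`. -/
noncomputable def RLminus (α v y : ℝ) (h : ℝ → ℝ) : ℝ :=
  (1 / Real.Gamma α) * ∫ t in y..v, (t - y) ^ (α - 1) * h t

/-- The quantity `I_{f,g}(x, λ, α, a, b)` with `g u = 1/u`. -/
noncomputable def Ifg (f : ℝ → ℝ) (x lam α a b : ℝ) : ℝ :=
  (1 - lam) * (((x - a) / (a * x)) ^ α + ((b - x) / (b * x)) ^ α) * f x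
    + lam * (((x - a) / (a * x)) ^ α * f a + ((b - x) / (b * x)) ^ α * f b)
    - Real.Gamma (α + 1) *
        (RLplus α (1 / x) (1 / a) (fun u => f (1 / u))
          + RLminus α (1 / x) (1 / b) (fun u => f (1 / u)))

/-- `C₁(α, λ) = (2αλ^{1+1/α} + 1)/(α+1) − λ`. -/
noncomputable def C1 (α lam : ℝ) : ℝ :=
  (2 * α * lam ^ (1 + 1 / α) + 1) / (α + 1) - lam

/-- `C₂(α, λ, q, a, x) = x^{2q} ∫₀¹ |t^α − λ| (t a + (1−t) x)^{−2q} dt`. -/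
noncomputable def C2 (α lam q a x : ℝ) : ℝ :=
  x ^ (2 * q) * ∫ t in (0:ℝ)..1, |t ^ α - lam| * (t * a + (1 - t) * x) ^ (-(2 * q))

/-- `C₃(α, λ, q, x, b) = b^{2q} ∫₀¹ |t^α − λ| (t b + (1−t) x)^{−2q} dt`. -/
noncomputable def C3 (α lam q x b : ℝ) : ℝ :=
  b ^ (2 * q) * ∫ t in (0:ℝ)..1, |t ^ α - lam| * (t * b + (1 - t) * x) ^ (-(2 * q))

/-- `h` is harmonically quasi-convex on `[a, b] ⊆ (0, ∞)`. -/
def HarmQuasiConvexOn (a b : ℝ) (h : ℝ → ℝ) : Prop :=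
  ∀ u ∈ Icc a b, ∀ v ∈ Icc a b, ∀ t ∈ Icc (0:ℝ) 1,
    h (u * v / (t * u + (1 - t) * v)) ≤ max (h u) (h v)

/-!
Write `ψ_c(t) = c H / (t c + (1 - t) H)` for the harmonic segment from `c` to `H`. Its reciprocal
is affine in `t`, and `1 / H` is the midpoint of `1 / b` and `1 / a`, so the substitution
`u = 1 / ψ_c(t)` turns both fractional integrals into
`Γ(α)⁻¹ ((b - a) / (2ab))^α ∫₀¹ t^(α-1) f(ψ_c(t)) dt` with `c = a` resp. `c = b`.
Integrating by parts against `t^α` gives `α ∫₀¹ t^(α-1) f(ψ_c) = f(H) - ∫₀¹ t^α f'(ψ_c) ψ_c'`,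
and harmonic quasi-convexity bounds `|f' ∘ ψ_c|` by `max(|f'(H)|^q, |f'(c)|^q)^(1/q)`.
Since `|ψ_c'| = c H |H - c| / (t c + (1 - t) H)²`, what remains are the integrals `C₂`, `C₃`.
-/

lemma integral_rpow_mul_deriv {φ φ' : ℝ → ℝ} {α : ℝ} (hα : 0 < α)
    (hφ : ContinuousOn φ (Icc 0 1)) (hφφ' : ∀ t ∈ Ioo (0 : ℝ) 1, HasDerivAt φ (φ' t) t)
    (hφ' : IntervalIntegrable φ' volume 0 1) :
    ∫ t in (0 : ℝ)..1, t ^ α * φ' t = φ 1 - α * ∫ t in (0 : ℝ)..1, t ^ (α - 1) * φ t := by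
  have hpow : ∀ t ∈ Ioo (0 : ℝ) 1, HasDerivAt (fun s : ℝ => s ^ α) (α * t ^ (α - 1)) t :=
    fun t ht => hasDerivAt_rpow_const (Or.inl ht.1.ne')
  rw [integral_mul_deriv_eq_deriv_mul_of_hasDerivAt (u' := fun t => α * t ^ (α - 1))
    (by rw [uIcc_of_le zero_le_one]; exact continuousOn_id.rpow_const fun _ _ => Or.inr hα.le)
    (by rwa [uIcc_of_le zero_le_one]) (by simpa using hpow) (by simpa using hφφ')
    ((intervalIntegrable_rpow' (by linarith)).const_mul α) hφ']
  simp only [one_rpow, zero_rpow hα.ne', one_mul, zero_mul, sub_zero, mul_assoc,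
    intervalIntegral.integral_const_mul]

lemma integral_rpow_sub_mul_eq {g : ℝ → ℝ} {p r : ℝ} (α : ℝ) (hpr : p < r) :
    ∫ u in p..r, (u - p) ^ (α - 1) * g u
      = (r - p) ^ α * ∫ t in (0 : ℝ)..1, t ^ (α - 1) * g (p + (r - p) * t) := by
  have hκ : 0 < r - p := sub_pos.2 hpr
  have hsub := smul_integral_comp_mul_add (a := 0) (b := 1)
    (fun u => (u - p) ^ (α - 1) * g u) (r - p) p
  simp only [mul_zero, mul_one, zero_add, sub_add_cancel, smul_eq_mul,
    add_sub_cancel_right] at hsub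
  calc ∫ u in p..r, (u - p) ^ (α - 1) * g u
      = (r - p) * ∫ t in (0 : ℝ)..1, (r - p) ^ (α - 1) * (t ^ (α - 1) * g (p + (r - p) * t)) := by
        rw [← hsub]
        congr 1
        refine integral_congr fun t ht => ?_
        rw [uIcc_of_le zero_le_one] at ht
        simp only [mul_rpow hκ.le ht.1, add_comm p, mul_assoc]
    _ = (r - p) ^ α * ∫ t in (0 : ℝ)..1, t ^ (α - 1) * g (p + (r - p) * t) := by
        rw [intervalIntegral.integral_const_mul, ← mul_assoc, rpow_sub_one hκ.ne',
          mul_div_cancel₀ _ hκ.ne']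

lemma integral_sub_rpow_mul_eq {g : ℝ → ℝ} {p r : ℝ} (α : ℝ) (hpr : p < r) :
    ∫ u in p..r, (r - u) ^ (α - 1) * g u
      = (r - p) ^ α * ∫ t in (0 : ℝ)..1, t ^ (α - 1) * g (r + (p - r) * t) := by
  have hκ : 0 < r - p := sub_pos.2 hpr
  have hsub := smul_integral_comp_mul_add (a := 0) (b := 1)
    (fun u => (r - u) ^ (α - 1) * g u) (p - r) r
  simp only [mul_zero, mul_one, zero_add, sub_add_cancel, smul_eq_mul] at hsub
  calc ∫ u in p..r, (r - u) ^ (α - 1) * g u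
      = (r - p) * ∫ t in (0 : ℝ)..1, (r - p) ^ (α - 1) * (t ^ (α - 1) * g (r + (p - r) * t)) := by
        rw [integral_symm, ← hsub, ← neg_mul, neg_sub]
        congr 1
        refine integral_congr fun t ht => ?_
        rw [uIcc_of_le zero_le_one] at ht
        rw [show r - ((p - r) * t + r) = (r - p) * t by ring, mul_rpow hκ.le ht.1, add_comm r,
          mul_assoc]
    _ = (r - p) ^ α * ∫ t in (0 : ℝ)..1, t ^ (α - 1) * g (r + (p - r) * t) := by
        rw [intervalIntegral.integral_const_mul, ← mul_assoc, rpow_sub_one hκ.ne',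
          mul_div_cancel₀ _ hκ.ne']

lemma inv_rpow_mul_Gamma_mul_half_rpow {δ α : ℝ} (hδ : 0 < δ) (hα : 0 < α) :
    δ⁻¹ ^ α * 2 ^ (α - 1) * Gamma (α + 1) * (1 / Gamma α) * (δ / 2) ^ α = α / 2 := by
  rw [inv_rpow hδ.le, div_rpow hδ.le zero_le_two, Gamma_add_one hα.ne', rpow_sub_one two_ne_zero]
  have : Gamma α ≠ 0 := (Gamma_pos_of_pos hα).ne'
  have : δ ^ α ≠ 0 := (rpow_pos_of_pos hδ α).ne'
  have : (2 : ℝ) ^ α ≠ 0 := (rpow_pos_of_pos two_pos α).ne'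
  field_simp

lemma two_mul_mul_div_add_mem_Ioo {a b : ℝ} (ha : 0 < a) (hab : a < b) :
    2 * a * b / (a + b) ∈ Ioo a b := by
  have hb : 0 < b := ha.trans hab
  constructor
  · rw [lt_div_iff₀ (by positivity)]
    nlinarith
  · rw [div_lt_iff₀ (by positivity)]
    nlinarith

noncomputable def harmonicSegment (c x t : ℝ) : ℝ := c * x / (t * c + (1 - t) * x)

section HarmonicSegment

variable {f f' : ℝ → ℝ} {a b c x t α : ℝ}

lemma harmonicSegment_denom_pos (hc : 0 < c) (hx : 0 < x) (ht : t ∈ Icc (0 : ℝ) 1) :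
    0 < t * c + (1 - t) * x := by
  rcases ht.1.eq_or_lt with rfl | ht0
  · simpa using hx
  · nlinarith [mul_pos ht0 hc, mul_nonneg (sub_nonneg.2 ht.2) hx.le]

lemma harmonicSegment_one (hc : c ≠ 0) : harmonicSegment c x 1 = x := by
  simp [harmonicSegment, hc]

lemma one_div_harmonicSegment (hc : c ≠ 0) (hx : x ≠ 0) :
    1 / harmonicSegment c x t = 1 / c + (1 / x - 1 / c) * t := by
  rw [harmonicSegment, one_div_div]
  field_simp
  ring

lemma harmonicSegment_injective (hc : c ≠ 0) (hx : x ≠ 0) (hcx : c ≠ x) :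
    Function.Injective (harmonicSegment c x) := by
  intro s t hst
  have hslope : 1 / x - 1 / c ≠ 0 := by
    simpa [sub_eq_zero, eq_comm] using hcx
  have := congrArg (1 / ·) hst
  simp only [one_div_harmonicSegment hc hx, add_right_inj] at this
  exact mul_left_cancel₀ hslope this

lemma harmonicSegment_mem_Icc (ha : 0 < a) (hc : c ∈ Icc a b) (hx : x ∈ Icc a b)
    (ht : t ∈ Icc (0 : ℝ) 1) : harmonicSegment c x t ∈ Icc a b := by
  have hc0 : 0 < c := ha.trans_le hc.1
  have hx0 : 0 < x := ha.trans_le hx.1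
  have hD := harmonicSegment_denom_pos hc0 hx0 ht
  constructor
  · rw [harmonicSegment, le_div_iff₀ hD]
    nlinarith [mul_nonneg ht.1 (mul_nonneg hc0.le (sub_nonneg.2 hx.1)),
      mul_nonneg (sub_nonneg.2 ht.2) (mul_nonneg hx0.le (sub_nonneg.2 hc.1))]
  · rw [harmonicSegment, div_le_iff₀ hD]
    nlinarith [mul_nonneg ht.1 (mul_nonneg hc0.le (sub_nonneg.2 hx.2)),
      mul_nonneg (sub_nonneg.2 ht.2) (mul_nonneg hx0.le (sub_nonneg.2 hc.2))]

lemma hasDerivAt_harmonicSegment (hD : t * c + (1 - t) * x ≠ 0) :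
    HasDerivAt (harmonicSegment c x) (c * x * (x - c) / (t * c + (1 - t) * x) ^ 2) t := by
  have hden : HasDerivAt (fun s => s * c + (1 - s) * x) (c - x) t := by
    have hs : HasDerivAt (fun s : ℝ => s * c) (1 * c) t := (hasDerivAt_id t).mul_const c
    have hs' : HasDerivAt (fun s : ℝ => (1 - s) * x) ((0 - 1) * x) t :=
      ((hasDerivAt_const t 1).sub (hasDerivAt_id t)).mul_const x
    exact (hs.add hs').congr_deriv (by ring)
  exact ((hasDerivAt_const t (c * x)).div hden hD).congr_deriv (by ring)

lemma intervalIntegrable_comp_harmonicSegment_mul_deriv {g : ℝ → ℝ} (ha : 0 < a)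
    (hc : c ∈ Icc a b) (hx : x ∈ Icc a b) (hcx : c ≠ x) (hg : IntegrableOn g (Icc a b)) :
    IntervalIntegrable (fun t => g (harmonicSegment c x t) *
      (c * x * (x - c) / (t * c + (1 - t) * x) ^ 2)) volume 0 1 := by
  have hc0 : 0 < c := ha.trans_le hc.1
  have hx0 : 0 < x := ha.trans_le hx.1
  have hderiv : ∀ t ∈ Icc (0 : ℝ) 1, HasDerivWithinAt (harmonicSegment c x)
      (c * x * (x - c) / (t * c + (1 - t) * x) ^ 2) (Icc 0 1) t := fun t ht =>
    (hasDerivAt_harmonicSegment (harmonicSegment_denom_pos hc0 hx0 ht).ne').hasDerivWithinAt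
  have habs := (integrableOn_image_iff_integrableOn_abs_deriv_smul measurableSet_Icc hderiv
    (harmonicSegment_injective hc0.ne' hx0.ne' hcx).injOn g).1
    (hg.mono_set (image_subset_iff.2 fun t ht => harmonicSegment_mem_Icc ha hc hx ht))
  -- the derivative has the constant sign of `x - c`
  have hsign : (fun t => g (harmonicSegment c x t) * (c * x * (x - c) / (t * c + (1 - t) * x) ^ 2))
      = fun t => (x - c) / |x - c| *
        (|c * x * (x - c) / (t * c + (1 - t) * x) ^ 2| • g (harmonicSegment c x t)) := by
    have hxc : |x - c| ≠ 0 := abs_ne_zero.2 (sub_ne_zero.2 hcx.symm)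
    ext t
    rw [smul_eq_mul, abs_div, abs_mul, abs_mul, abs_of_pos hc0, abs_of_pos hx0,
      abs_of_nonneg (sq_nonneg (t * c + (1 - t) * x))]
    field_simp
  rw [intervalIntegrable_iff_integrableOn_Icc_of_le zero_le_one, hsign]
  exact habs.const_mul _

lemma integral_rpow_mul_deriv_comp_harmonicSegment (ha : 0 < a) (hc : c ∈ Icc a b)
    (hx : x ∈ Icc a b) (hcx : c ≠ x) (hf : ∀ u ∈ Icc a b, HasDerivAt f (f' u) u)
    (hf' : IntegrableOn f' (Icc a b)) (hα : 0 < α) :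
    ∫ t in (0 : ℝ)..1, t ^ α *
        (f' (harmonicSegment c x t) * (c * x * (x - c) / (t * c + (1 - t) * x) ^ 2))
      = f x - α * ∫ t in (0 : ℝ)..1, t ^ (α - 1) * f (harmonicSegment c x t) := by
  have hc0 : 0 < c := ha.trans_le hc.1
  have hderiv : ∀ t ∈ Icc (0 : ℝ) 1, HasDerivAt (f ∘ harmonicSegment c x)
      (f' (harmonicSegment c x t) * (c * x * (x - c) / (t * c + (1 - t) * x) ^ 2)) t :=
    fun t ht => (hf _ (harmonicSegment_mem_Icc ha hc hx ht)).comp t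
      (hasDerivAt_harmonicSegment (harmonicSegment_denom_pos hc0 (ha.trans_le hx.1) ht).ne')
  have := integral_rpow_mul_deriv hα
    (fun t ht => (hderiv t ht).continuousAt.continuousWithinAt)
    (fun t ht => hderiv t (Ioo_subset_Icc_self ht))
    (intervalIntegrable_comp_harmonicSegment_mul_deriv ha hc hx hcx hf')
  rwa [Function.comp_apply, harmonicSegment_one hc0.ne'] at this

lemma abs_integral_rpow_mul_deriv_comp_harmonicSegment_le {B : ℝ} (hc : 0 < c) (hx : 0 < x)
    (hα : 0 ≤ α) (hB : ∀ t ∈ Icc (0 : ℝ) 1, |f' (harmonicSegment c x t)| ≤ B) :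
    |∫ t in (0 : ℝ)..1, t ^ α *
        (f' (harmonicSegment c x t) * (c * x * (x - c) / (t * c + (1 - t) * x) ^ 2))|
      ≤ c * x * |x - c| * B * ∫ t in (0 : ℝ)..1, t ^ α * (t * c + (1 - t) * x) ^ (-2 : ℝ) := by
  have hD : ∀ t ∈ Icc (0 : ℝ) 1, 0 < t * c + (1 - t) * x :=
    fun t ht => harmonicSegment_denom_pos hc hx ht
  rw [← Real.norm_eq_abs, ← intervalIntegral.integral_const_mul]
  refine intervalIntegral.norm_integral_le_of_norm_le zero_le_one
    (ae_of_all _ fun t ht => ?_) (ContinuousOn.intervalIntegrable (μ := volume) ?_)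
  · have ht' := Ioc_subset_Icc_self ht
    calc ‖t ^ α * (f' (harmonicSegment c x t) * (c * x * (x - c) / (t * c + (1 - t) * x) ^ 2))‖
        = t ^ α * (|f' (harmonicSegment c x t)| *
            (c * x * |x - c| / (t * c + (1 - t) * x) ^ 2)) := by
          rw [Real.norm_eq_abs, abs_mul, abs_mul, abs_of_nonneg (rpow_nonneg ht'.1 α), abs_div,
            abs_mul, abs_mul, abs_of_pos hc, abs_of_pos hx,
            abs_of_nonneg (sq_nonneg (t * c + (1 - t) * x))]
      _ ≤ t ^ α * (B * (c * x * |x - c| / (t * c + (1 - t) * x) ^ 2)) := by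
          gcongr
          · exact rpow_nonneg ht'.1 α
          · exact hB t ht'
      _ = c * x * |x - c| * B * (t ^ α * (t * c + (1 - t) * x) ^ (-2 : ℝ)) := by
          rw [rpow_neg (hD t ht').le, rpow_two]
          ring
  · rw [uIcc_of_le zero_le_one]
    exact continuousOn_const.mul ((continuousOn_id.rpow_const fun _ _ => Or.inr hα).mul
      ((continuousOn_id.mul continuousOn_const).add
        ((continuousOn_const.sub continuousOn_id).mul continuousOn_const) |>.rpow_const
          fun t ht => Or.inl (hD t ht).ne'))

lemma abs_le_max_rpow_of_harmQuasiConvexOn {q : ℝ} (hq : 0 < q)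
    (hqc : HarmQuasiConvexOn a b (fun u => |f' u| ^ q)) (hc : c ∈ Icc a b) (hx : x ∈ Icc a b)
    (ht : t ∈ Icc (0 : ℝ) 1) :
    |f' (harmonicSegment c x t)| ≤ max (|f' x| ^ q) (|f' c| ^ q) ^ (1 / q) := by
  rw [one_div, le_rpow_inv_iff_of_pos (abs_nonneg _)
    (le_max_of_le_left (rpow_nonneg (abs_nonneg _) q)) hq, max_comm]
  exact hqc c hc x hx t ht

lemma abs_sub_mul_integral_comp_harmonicSegment_le {q : ℝ} (ha : 0 < a) (hc : c ∈ Icc a b)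
    (hx : x ∈ Icc a b) (hcx : c ≠ x) (hf : ∀ u ∈ Icc a b, HasDerivAt f (f' u) u)
    (hf' : IntegrableOn f' (Icc a b)) (hq : 0 < q)
    (hqc : HarmQuasiConvexOn a b (fun u => |f' u| ^ q)) (hα : 0 < α) :
    |f x - α * ∫ t in (0 : ℝ)..1, t ^ (α - 1) * f (harmonicSegment c x t)|
      ≤ c * x * |x - c| * max (|f' x| ^ q) (|f' c| ^ q) ^ (1 / q)
        * ∫ t in (0 : ℝ)..1, t ^ α * (t * c + (1 - t) * x) ^ (-2 : ℝ) := by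
  rw [← integral_rpow_mul_deriv_comp_harmonicSegment ha hc hx hcx hf hf' hα]
  exact abs_integral_rpow_mul_deriv_comp_harmonicSegment_le (ha.trans_le hc.1)
    (ha.trans_le hx.1) hα.le fun t ht => abs_le_max_rpow_of_harmQuasiConvexOn hq hqc hc hx ht

lemma RLplus_one_div_eq (hc : 0 < c) (hcx : c < x) :
    RLplus α (1 / x) (1 / c) (fun u => f (1 / u))
      = 1 / Gamma α * ((1 / c - 1 / x) ^ α *
          ∫ t in (0 : ℝ)..1, t ^ (α - 1) * f (harmonicSegment c x t)) := by
  rw [RLplus, integral_sub_rpow_mul_eq α (one_div_lt_one_div_of_lt hc hcx)]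
  simp_rw [← one_div_harmonicSegment hc.ne' (hc.trans hcx).ne', one_div_one_div]

lemma RLminus_one_div_eq (hx : 0 < x) (hxc : x < c) :
    RLminus α (1 / x) (1 / c) (fun u => f (1 / u))
      = 1 / Gamma α * ((1 / x - 1 / c) ^ α *
          ∫ t in (0 : ℝ)..1, t ^ (α - 1) * f (harmonicSegment c x t)) := by
  rw [RLminus, integral_rpow_sub_mul_eq α (one_div_lt_one_div_of_lt hx hxc)]
  simp_rw [← one_div_harmonicSegment (hx.trans hxc).ne' hx.ne', one_div_one_div]

end HarmonicSegment

lemma C2_zero_one (α a x : ℝ) :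
    C2 α 0 1 a x = x ^ 2 * ∫ t in (0 : ℝ)..1, t ^ α * (t * a + (1 - t) * x) ^ (-2 : ℝ) := by
  rw [C2, mul_one, rpow_two]
  congr 1
  refine integral_congr fun t ht => ?_
  rw [uIcc_of_le zero_le_one] at ht
  rw [sub_zero, abs_of_nonneg (rpow_nonneg ht.1 α)]

lemma C3_zero_one (α x b : ℝ) :
    C3 α 0 1 x b = b ^ 2 * ∫ t in (0 : ℝ)..1, t ^ α * (t * b + (1 - t) * x) ^ (-2 : ℝ) := by
  rw [C3, mul_one, rpow_two]
  congr 1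
  refine integral_congr fun t ht => ?_
  rw [uIcc_of_le zero_le_one] at ht
  rw [sub_zero, abs_of_nonneg (rpow_nonneg ht.1 α)]

theorem stmt_12 (f f' : ℝ → ℝ) (a b : ℝ) (ha : 0 < a) (hab : a < b)
    (hf : ∀ u ∈ Icc a b, HasDerivAt f (f' u) u)
    (hint : IntervalIntegrable f' volume a b)
    (q : ℝ) (hq : 1 ≤ q)
    (hqc : HarmQuasiConvexOn a b (fun u => |f' u| ^ q))
    (α : ℝ) (hα : 0 < α) (H : ℝ) (hH : H = 2 * a * b / (a + b)) :
    |f H - (a * b / (b - a)) ^ α * 2 ^ (α - 1) * Real.Gamma (α + 1) * (RLplus α (1 / H) (1 / a) (fun u => f (1 / u)) + RLminus α (1 / H) (1 / b) (fun u => f (1 / u)))| ≤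
      (b - a) / (4 * a * b) *
        (a ^ 2 * C2 α 0 1 a H * max (|f' H| ^ q) (|f' a| ^ q) ^ (1 / q)
          + H ^ 2 * C3 α 0 1 H b * max (|f' H| ^ q) (|f' b| ^ q) ^ (1 / q)) := by
  have hb : 0 < b := ha.trans hab
  obtain ⟨hHa, hHb⟩ : H ∈ Ioo a b := hH ▸ two_mul_mul_div_add_mem_Ioo ha hab
  have hHmem : H ∈ Icc a b := ⟨hHa.le, hHb.le⟩
  have hf' := (intervalIntegrable_iff_integrableOn_Icc_of_le hab.le).1 hint
  have hq0 : 0 < q := one_pos.trans_le hq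
  have hA := abs_sub_mul_integral_comp_harmonicSegment_le ha (left_mem_Icc.2 hab.le) hHmem
    hHa.ne hf hf' hq0 hqc hα
  have hB := abs_sub_mul_integral_comp_harmonicSegment_le ha (right_mem_Icc.2 hab.le) hHmem
    hHb.ne' hf hf' hq0 hqc hα
  rw [abs_of_pos (sub_pos.2 hHa)] at hA
  rw [abs_of_neg (sub_neg.2 hHb), neg_sub] at hB
  have hκa : 1 / a - 1 / H = (b - a) / (a * b) / 2 := by rw [hH]; field_simp; ring
  have hκb : 1 / H - 1 / b = (b - a) / (a * b) / 2 := by rw [hH]; field_simp; ring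
  have hP := inv_rpow_mul_Gamma_mul_half_rpow (div_pos (sub_pos.2 hab) (mul_pos ha hb)) hα
  rw [inv_div] at hP
  rw [RLplus_one_div_eq ha hHa, RLminus_one_div_eq (ha.trans hHa) hHb, hκa, hκb, C2_zero_one,
    C3_zero_one]
  set Wa := ∫ t in (0 : ℝ)..1, t ^ (α - 1) * f (harmonicSegment a H t)
  set Wb := ∫ t in (0 : ℝ)..1, t ^ (α - 1) * f (harmonicSegment b H t)
  set Ka := ∫ t in (0 : ℝ)..1, t ^ α * (t * a + (1 - t) * H) ^ (-2 : ℝ)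
  set Kb := ∫ t in (0 : ℝ)..1, t ^ α * (t * b + (1 - t) * H) ^ (-2 : ℝ)
  set Ma := max (|f' H| ^ q) (|f' a| ^ q) ^ (1 / q)
  set Mb := max (|f' H| ^ q) (|f' b| ^ q) ^ (1 / q)
  calc _ = |((f H - α * Wa) + (f H - α * Wb)) / 2| := by
        congr 1
        linear_combination (-(Wa + Wb)) * hP
    _ ≤ (a * H * (H - a) * Ma * Ka + b * H * (b - H) * Mb * Kb) / 2 := by
        rw [abs_div, abs_two]
        gcongr
        exact (abs_add_le _ _).trans (add_le_add hA hB)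
    _ = _ := by
        rw [hH]
        field_simp
        ring
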